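/- arXiv:2305.12051 — 3 statements merged into one kernel-verified Lean document; each statement's English description precedes it below -/
import Mathlib

section
/- For x in the open unit disc, ₂F₁(1/3,1/3;2/3;x) · ₂F₁(−1/3,2/3;1/3;x) + (x/2) · ₂F₁(2/3,2/3;4/3;x) · ₂F₁(1/3,4/3;5/3;x) = 1. -/
open scoped BigOperators

/-- The Pochhammer symbol `(a)ₙ = a(a+1)⋯(a+n−1)`. -/
noncomputable def poch (a : ℂ) (n : ℕ) : ℂ := ∏ i ∈ Finset.range n, (a + i)

/-- The Gauss hypergeometric series `₂F₁(a,b;c;x) = Σ (a)ₙ(b)ₙ/((c)ₙ n!) xⁿ`. -/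
noncomputable def F21 (a b c x : ℂ) : ℂ :=
  ∑' n : ℕ, poch a n * poch b n / (poch c n * (n.factorial : ℂ)) * x ^ n

/-!
Write `f, h, g, κ` for the coefficient sequences of `₂F₁(1/3,1/3;2/3)`,
`₂F₁(-1/3,2/3;1/3)`, `₂F₁(2/3,2/3;4/3)` and `₂F₁(1/3,4/3;5/3)`. Inside the unit disc
both products are power series whose coefficients are Cauchy products, and the coefficient of
`x^(n+1)` on the left-hand side is `f (n+1) + ∑_{k+m=n} (f k * h (m+1) + g m * κ k / 2)`.
By the contiguous relations every summand is a rational multiple of `f k * g m`, and it equals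
`E (k+1) m - E k (m+1)` for `E k j = -k(3j+1)/(k+j) · f k * g j` (`telescopingTerm`).
The sum telescopes to `E (n+1) 0 = -f (n+1)`, so every coefficient except the constant one
vanishes.
-/

open Finset

section Pochhammer

variable (a : ℂ) (n : ℕ)

lemma poch_zero : poch a 0 = 1 := by simp [poch]

lemma poch_succ_right : poch a (n + 1) = poch a n * (a + n) := prod_range_succ _ n

lemma poch_succ_left : poch a (n + 1) = a * poch (a + 1) n := by
  simp only [poch, prod_range_succ', Nat.cast_succ, Nat.cast_zero, add_zero]
  ring_nf

lemma poch_eq_ascPochhammer_eval : poch a n = (ascPochhammer ℂ n).eval a := by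
  induction n with
  | zero => simp [poch_zero]
  | succ n ih => rw [poch_succ_right, ascPochhammer_succ_eval, ih]

variable {a}

lemma poch_ne_zero (ha : ∀ k : ℕ, a + k ≠ 0) : poch a n ≠ 0 :=
  prod_ne_zero_iff.mpr fun k _ => ha k

lemma poch_add_one (ha : a ≠ 0) : poch (a + 1) n = poch a n * (a + n) / a := by
  rw [eq_div_iff ha, mul_comm, ← poch_succ_left, poch_succ_right]

end Pochhammer

lemma add_natCast_ne_zero_of_re_pos {a : ℂ} (ha : 0 < a.re) (k : ℕ) : a + k ≠ 0 := by
  intro h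
  have := congrArg Complex.re h
  simp only [Complex.add_re, Complex.natCast_re, Complex.zero_re] at this
  exact (by positivity : 0 < a.re + k).ne' this

noncomputable def F21Coeff (a b c : ℂ) (n : ℕ) : ℂ :=
  poch a n * poch b n / (poch c n * (n.factorial : ℂ))

section Coefficients

variable (a b c : ℂ) (n : ℕ)

lemma F21_eq_tsum (x : ℂ) : F21 a b c x = ∑' n, F21Coeff a b c n * x ^ n := rfl

@[simp] lemma F21Coeff_zero : F21Coeff a b c 0 = 1 := by simp [F21Coeff, poch_zero]

variable {c}

lemma F21Coeff_succ (hc : ∀ k : ℕ, c + k ≠ 0) :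
    F21Coeff a b c (n + 1) = (a + n) * (b + n) / ((c + n) * (n + 1)) * F21Coeff a b c n := by
  have := poch_ne_zero n hc
  have := hc n
  simp only [F21Coeff, poch_succ_right, Nat.factorial_succ, Nat.cast_mul, Nat.cast_succ]
  field_simp

lemma F21Coeff_succ_eq_mul_F21Coeff_add_one (hc : ∀ k : ℕ, c + k ≠ 0) :
    F21Coeff a b c (n + 1) = a * (b + n) / (c * (n + 1)) * F21Coeff (a + 1) b (c + 1) n := by
  obtain ⟨hc0, hpc⟩ := mul_ne_zero_iff.mp (poch_succ_left c n ▸ poch_ne_zero (n + 1) hc)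
  rw [F21Coeff, F21Coeff, poch_succ_left a, poch_succ_right b, poch_succ_left c,
    Nat.factorial_succ]
  push_cast
  field_simp

variable {b}

lemma F21Coeff_add_one_add_one (hb : b ≠ 0) (hc : ∀ k : ℕ, c + k ≠ 0) :
    F21Coeff a (b + 1) (c + 1) n = c * (b + n) / (b * (c + n)) * F21Coeff a b c n := by
  have hc0 : c ≠ 0 := by simpa using hc 0
  have := poch_ne_zero n hc
  have := hc n
  simp only [F21Coeff, poch_add_one n hb, poch_add_one n hc0]
  field_simp

end Coefficients

lemma one_le_radius_ordinaryHypergeometricSeries {𝕂 : Type*} (𝔸 : Type*) [RCLike 𝕂]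
    [NormedDivisionRing 𝔸] [NormedAlgebra 𝕂 𝔸] (a b c : 𝕂) :
    1 ≤ (ordinaryHypergeometricSeries 𝔸 a b c).radius := by
  by_cases h : ∀ k : ℕ, (k : 𝕂) ≠ -a ∧ (k : 𝕂) ≠ -b ∧ (k : 𝕂) ≠ -c
  · exact (ordinaryHypergeometricSeries_radius_eq_one 𝔸 a b c h).ge
  simp only [not_forall, not_and_or, not_not] at h
  obtain ⟨k, h | h | h⟩ := h <;> rw [neg_eq_iff_eq_neg.mp h.symm] <;>
    simp [ordinaryHypergeometric_radius_top_of_neg_nat₁,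
      ordinaryHypergeometric_radius_top_of_neg_nat₂,
      ordinaryHypergeometric_radius_top_of_neg_nat₃]

lemma ordinaryHypergeometricSeries_apply_eq_F21Coeff (a b c x : ℂ) (n : ℕ) :
    ordinaryHypergeometricSeries ℂ a b c n (fun _ => x) = F21Coeff a b c n * x ^ n := by
  rw [ordinaryHypergeometricSeries_apply_eq, smul_eq_mul, F21Coeff, poch_eq_ascPochhammer_eval,
    poch_eq_ascPochhammer_eval, poch_eq_ascPochhammer_eval]
  ring

lemma summable_norm_F21Coeff_mul_pow (a b c : ℂ) {x : ℂ} (hx : ‖x‖ < 1) :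
    Summable fun n => ‖F21Coeff a b c n * x ^ n‖ := by
  have hx' : x ∈ Metric.eball (0 : ℂ) (ordinaryHypergeometricSeries ℂ a b c).radius :=
    mem_eball_zero_iff.mpr <| lt_of_lt_of_le (by rwa [← ofReal_norm, ENNReal.ofReal_lt_one])
      (one_le_radius_ordinaryHypergeometricSeries ℂ a b c)
  simpa only [ordinaryHypergeometricSeries_apply_eq_F21Coeff] using
    (ordinaryHypergeometricSeries ℂ a b c).summable_norm_apply hx'

section PowerSeries

variable {R : Type*}

lemma sum_antidiagonal_sub_eq [AddCommGroup R] (E : ℕ → ℕ → R) (n : ℕ) :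
    ∑ p ∈ antidiagonal n, (E (p.1 + 1) p.2 - E p.1 (p.2 + 1)) = E (n + 1) 0 - E 0 (n + 1) := by
  induction n generalizing E with
  | zero => simp
  | succ n ih =>
    rw [Nat.sum_antidiagonal_succ, ih fun i j => E (i + 1) j]
    abel

lemma hasSum_mul_of_summable_norm [NormedCommRing R] [CompleteSpace R] {f g : ℕ → R} {x : R}
    (hf : Summable fun n => ‖f n * x ^ n‖) (hg : Summable fun n => ‖g n * x ^ n‖) :
    HasSum (fun n => (∑ p ∈ antidiagonal n, f p.1 * g p.2) * x ^ n)
      ((∑' n, f n * x ^ n) * ∑' n, g n * x ^ n) := by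
  have hterm : (fun n => (∑ p ∈ antidiagonal n, f p.1 * g p.2) * x ^ n) =
      fun n => ∑ p ∈ antidiagonal n, f p.1 * x ^ p.1 * (g p.2 * x ^ p.2) := by
    ext n
    rw [sum_mul]
    refine sum_congr rfl fun p hp => ?_
    rw [← mem_antidiagonal.mp hp, pow_add]
    ring
  rw [tsum_mul_tsum_eq_tsum_sum_antidiagonal_of_summable_norm hf hg, hterm]
  exact (summable_norm_sum_mul_antidiagonal_of_summable_norm hf hg).of_norm.hasSum

lemma add_mul_eq_of_hasSum_of_coeff_succ [CommRing R] [TopologicalSpace R] [IsTopologicalRing R]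
    [T2Space R] {p q : ℕ → R} {x c P Q : R} (hP : HasSum (fun n => p n * x ^ n) P)
    (hQ : HasSum (fun n => q n * x ^ n) Q) (h : ∀ n, p (n + 1) + c * q n = 0) :
    P + c * x * Q = p 0 := by
  have hsum := ((hasSum_nat_add_iff' 1).mpr hP).add (hQ.mul_left (c * x))
  have hzero : (fun n => p (n + 1) * x ^ (n + 1) + c * x * (q n * x ^ n)) = 0 := by
    ext n
    rw [Pi.zero_apply]
    linear_combination x ^ (n + 1) * h n
  rw [hzero] at hsum
  simp only [range_one, sum_singleton, pow_zero, mul_one] at hsum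
  linear_combination hsum.unique hasSum_zero

end PowerSeries

noncomputable def telescopingTerm (k j : ℕ) : ℂ :=
  -(k * (3 * j + 1) / (k + j)) * F21Coeff (1/3) (1/3) (2/3) k * F21Coeff (2/3) (2/3) (4/3) j

lemma F21Coeff_telescoping_step (k m : ℕ) :
    F21Coeff (1/3) (1/3) (2/3) k * F21Coeff (-1/3) (2/3) (1/3) (m + 1)
      + 1/2 * (F21Coeff (2/3) (2/3) (4/3) m * F21Coeff (1/3) (4/3) (5/3) k)
      = telescopingTerm (k + 1) m - telescopingTerm k (m + 1) := by
  have hpos {r : ℂ} (hr : 0 < r.re) := add_natCast_ne_zero_of_re_pos hr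
  have h13 : ∀ i : ℕ, (1/3 : ℂ) + i ≠ 0 := hpos (by norm_num)
  have h23 : ∀ i : ℕ, (2/3 : ℂ) + i ≠ 0 := hpos (by norm_num)
  have h43 : ∀ i : ℕ, (4/3 : ℂ) + i ≠ 0 := hpos (by norm_num)
  have hf := F21Coeff_succ (1/3) (1/3) k h23
  have hg := F21Coeff_succ (2/3) (2/3) m h43
  have hh : F21Coeff (-1/3) (2/3) (1/3) (m + 1)
      = -1/3 * (2/3 + m) / (1/3 * (m + 1)) * F21Coeff (2/3) (2/3) (4/3) m := by
    rw [F21Coeff_succ_eq_mul_F21Coeff_add_one _ _ _ h13]; norm_num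
  have hk : F21Coeff (1/3) (4/3) (5/3) k
      = 2/3 * (1/3 + k) / (1/3 * (2/3 + k)) * F21Coeff (1/3) (1/3) (2/3) k := by
    convert F21Coeff_add_one_add_one (1/3) k (b := 1/3) (by norm_num) h23 using 2 <;> norm_num
  rw [telescopingTerm, telescopingTerm, hf, hg, hh, hk]
  have : (2 + 3 * k : ℂ) ≠ 0 := by exact_mod_cast (by omega : 2 + 3 * k ≠ 0)
  have : (4 + 3 * m : ℂ) ≠ 0 := by exact_mod_cast (by omega : 4 + 3 * m ≠ 0)
  have : (k + 1 + m : ℂ) ≠ 0 := by exact_mod_cast (by omega : k + 1 + m ≠ 0)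
  have : (k + (m + 1) : ℂ) ≠ 0 := by exact_mod_cast (by omega : k + (m + 1) ≠ 0)
  push_cast
  field_simp
  ring

lemma F21Coeff_cauchy_product_relation (n : ℕ) :
    (∑ p ∈ antidiagonal (n + 1),
        F21Coeff (1/3) (1/3) (2/3) p.1 * F21Coeff (-1/3) (2/3) (1/3) p.2)
      + 1/2 * ∑ p ∈ antidiagonal n,
        F21Coeff (2/3) (2/3) (4/3) p.1 * F21Coeff (1/3) (4/3) (5/3) p.2 = 0 := by
  rw [Nat.sum_antidiagonal_succ', ← Nat.sum_antidiagonal_swap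
    (f := fun p => F21Coeff (2/3) (2/3) (4/3) p.1 * F21Coeff (1/3) (4/3) (5/3) p.2),
    mul_sum, add_assoc, ← sum_add_distrib]
  simp only [Prod.fst_swap, Prod.snd_swap, F21Coeff_telescoping_step]
  rw [sum_antidiagonal_sub_eq telescopingTerm]
  have : (n + 1 : ℂ) ≠ 0 := n.cast_add_one_ne_zero
  simp only [telescopingTerm, F21Coeff_zero, Nat.cast_add, Nat.cast_one, Nat.cast_zero, mul_zero,
    zero_add, add_zero, mul_one, zero_mul, zero_div, neg_zero, sub_zero]
  field_simp
  ring

/-- For `x` in the open unit disc,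
`₂F₁(1/3,1/3;2/3;x)·₂F₁(−1/3,2/3;1/3;x) + (x/2)·₂F₁(2/3,2/3;4/3;x)·₂F₁(1/3,4/3;5/3;x) = 1`. -/
theorem hypergeometric_riemann_relation (x : ℂ) (hx : ‖x‖ < 1) :
    F21 (1/3) (1/3) (2/3) x * F21 (-1/3) (2/3) (1/3) x
      + x / 2 * F21 (2/3) (2/3) (4/3) x * F21 (1/3) (4/3) (5/3) x = 1 := by
  have hP := hasSum_mul_of_summable_norm (summable_norm_F21Coeff_mul_pow (1/3) (1/3) (2/3) hx)
    (summable_norm_F21Coeff_mul_pow (-1/3) (2/3) (1/3) hx)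
  have hQ := hasSum_mul_of_summable_norm (summable_norm_F21Coeff_mul_pow (2/3) (2/3) (4/3) hx)
    (summable_norm_F21Coeff_mul_pow (1/3) (4/3) (5/3) hx)
  have h := add_mul_eq_of_hasSum_of_coeff_succ hP hQ F21Coeff_cauchy_product_relation
  simp only [Nat.antidiagonal_zero, sum_singleton, F21Coeff_zero, mul_one] at h
  simp only [F21_eq_tsum]
  linear_combination h
end

section
/- For real parameters with Re(c+d−a−b₁−b₂)>0, Re(c−a−b′)>0 and Re(c+d−a−b₁−b₂−b′)>0, the double series F(x,y) = Σ_{m,n≥0} (a)_{m+n}(b₁)_m(b₂)_m(b′)_n / ((c)_{m+n}(d)_m) · x^m y^n/(m! n!) converges absolutely for |x| ≤ 1 and |y| ≤ 1. -/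
open scoped BigOperators

/-- The general term of the Kampé de Fériet hypergeometric function `F^{1;2;1}_{1;1;0}`:
`(a)_{m+n}(b₁)ₘ(b₂)ₘ(b′)ₙ / ((c)_{m+n}(d)ₘ) · xᵐ yⁿ/(m! n!)` for `p = (m, n)`. -/
noncomputable def kampeTerm (a b₁ b₂ b' c d x y : ℂ) (p : ℕ × ℕ) : ℂ :=
  poch a (p.1 + p.2) * poch b₁ p.1 * poch b₂ p.1 * poch b' p.2
    / (poch c (p.1 + p.2) * poch d p.1)
    * x ^ p.1 * y ^ p.2 / ((p.1.factorial : ℂ) * (p.2.factorial : ℂ))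

/-!
Gauss's limit formula `Complex.GammaSeq_tendsto_Gamma` says that `n! (n+1)^(s-1) / (s)ₙ → Γ(s)`
when `s` is not a pole of `Γ`, so `‖(s)ₙ‖` is comparable to `n! (n+1)^(Re s - 1)`; at a pole only
the upper bound survives, since `(s)ₙ` is then eventually zero. The factorials cancel, and the
`(m, n)` term is `O((m+n+1)^P (m+1)^Q (n+1)^R)` with `P = Re(a-c)`, `Q = Re(b₁+b₂-d) - 1`,
`R = Re b' - 1`. The three conditions on the parameters are exactly what allows splitting the
power of `m+n+1` between `m+1` and `n+1` so as to leave two convergent one-variable `p`-series.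
-/

open Filter Topology Asymptotics Finset
open scoped Nat

lemma summable_nat_add_one_rpow {s : ℝ} (hs : s < -1) :
    Summable fun n : ℕ => ((n : ℝ) + 1) ^ s := by
  simpa using (summable_nat_add_iff 1).2 (Real.summable_nat_rpow.2 hs)

lemma exists_rpow_add_le_rpow_mul_rpow {P Q R : ℝ} (hPQ : P + Q < -1) (hPR : P + R < -1)
    (hPQR : P + Q + R < -2) : ∃ α β : ℝ, α + Q < -1 ∧ β + R < -1 ∧
      ∀ m n : ℕ, ((m : ℝ) + n + 1) ^ P ≤ ((m : ℝ) + 1) ^ α * ((n : ℝ) + 1) ^ β := by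
  rcases le_or_gt 0 P with hP | hP
  · refine ⟨P, P, by linarith, by linarith, fun m n => ?_⟩
    rw [← Real.mul_rpow (by positivity) (by positivity)]
    have hm : (0 : ℝ) ≤ m := m.cast_nonneg
    have hn : (0 : ℝ) ≤ n := n.cast_nonneg
    exact Real.rpow_le_rpow (by positivity) (by nlinarith) hP
  · obtain ⟨α, hlo, hhi⟩ := exists_between (show max P (P + R + 1) < min 0 (-1 - Q) by
      simp only [max_lt_iff, lt_min_iff]; constructor <;> constructor <;> linarith)
    rw [max_lt_iff] at hlo
    rw [lt_min_iff] at hhi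
    refine ⟨α, P - α, by linarith, by linarith, fun m n => ?_⟩
    have hmn : (0 : ℝ) < m + n + 1 := by positivity
    rw [← add_sub_cancel α P, Real.rpow_add hmn, add_sub_cancel_left]
    have hm : (m : ℝ) + 1 ≤ m + n + 1 := by simp
    have hn : (n : ℝ) + 1 ≤ m + n + 1 := by simp
    exact mul_le_mul (Real.rpow_le_rpow_of_nonpos (by positivity) hm hhi.1.le)
      (Real.rpow_le_rpow_of_nonpos (by positivity) hn (by linarith)) (by positivity)
      (by positivity)

lemma summable_rpow_mul_rpow_mul_rpow {P Q R : ℝ} (hPQ : P + Q < -1) (hPR : P + R < -1)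
    (hPQR : P + Q + R < -2) : Summable fun p : ℕ × ℕ =>
      ((p.1 : ℝ) + p.2 + 1) ^ P * ((p.1 : ℝ) + 1) ^ Q * ((p.2 : ℝ) + 1) ^ R := by
  obtain ⟨α, β, hα, hβ, hle⟩ := exists_rpow_add_le_rpow_mul_rpow hPQ hPR hPQR
  refine Summable.of_nonneg_of_le (fun p => by positivity) (fun p => ?_)
    ((summable_nat_add_one_rpow hα).mul_of_nonneg (summable_nat_add_one_rpow hβ)
      (fun m => by positivity) fun n => by positivity)
  have hm : (0 : ℝ) < p.1 + 1 := by positivity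
  have hn : (0 : ℝ) < p.2 + 1 := by positivity
  calc ((p.1 : ℝ) + p.2 + 1) ^ P * ((p.1 : ℝ) + 1) ^ Q * ((p.2 : ℝ) + 1) ^ R
      ≤ ((p.1 : ℝ) + 1) ^ α * ((p.2 : ℝ) + 1) ^ β * ((p.1 : ℝ) + 1) ^ Q * ((p.2 : ℝ) + 1) ^ R := by
        gcongr; exact hle p.1 p.2
    _ = ((p.1 : ℝ) + 1) ^ (α + Q) * ((p.2 : ℝ) + 1) ^ (β + R) := by
        rw [Real.rpow_add hm, Real.rpow_add hn]; ring

lemma poch_eq_zero_of_lt {s : ℂ} {m n : ℕ} (hs : s = -m) (hmn : m < n) : poch s n = 0 :=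
  prod_eq_zero (mem_range.2 hmn) (by simp [hs])

lemma poch_ne_zero_iff {s : ℂ} : (∀ n, poch s n ≠ 0) ↔ ∀ m : ℕ, s ≠ -m := by
  refine ⟨fun h m hm => h (m + 1) (poch_eq_zero_of_lt hm m.lt_succ_self), fun h n => ?_⟩
  exact prod_ne_zero_iff.2 fun k _ => by simpa [add_eq_zero_iff_eq_neg] using h k

lemma tendsto_factorial_mul_cpow_div_poch {s : ℂ} (hs : ∀ m : ℕ, s ≠ -m) :
    Tendsto (fun n : ℕ => (n ! : ℂ) * ((n + 1 : ℕ) : ℂ) ^ (s - 1) / poch s n) atTop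
      (𝓝 (Complex.Gamma s)) := by
  have hlim (t : ℂ) : Tendsto (fun n : ℕ => (t + n) / (n + 1)) atTop (𝓝 1) := by
    simpa [add_comm _ (1 : ℂ)] using tendsto_add_mul_div_add_mul_atTop_nhds t 1 1 one_ne_zero
  have key := (((Complex.GammaSeq_tendsto_Gamma s).comp (tendsto_add_atTop_nat 1)).mul
    (hlim s)).mul (hlim (s + 1))
  rw [mul_one, mul_one] at key
  -- `GammaSeq s (n+1) = (n+1)^s (n+1)! / ((s)ₙ (s+n) (s+n+1))`
  refine key.congr fun n => ?_
  have hpoch : poch s n ≠ 0 := poch_ne_zero_iff.2 hs n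
  have hn : ((n + 1 : ℕ) : ℂ) ≠ 0 := Nat.cast_ne_zero.2 n.succ_ne_zero
  have hsn (k : ℕ) : s + k ≠ 0 := by simpa [add_eq_zero_iff_eq_neg] using hs k
  have hprod : ∏ j ∈ range (n + 1 + 1), (s + j) = poch s n * (s + n) * (s + (n + 1 : ℕ)) := by
    simp only [poch, prod_range_succ]
  simp only [Function.comp_apply, Complex.GammaSeq, hprod, Complex.cpow_sub _ _ hn,
    Complex.cpow_one, Nat.factorial_succ]
  have hsn₀ := hsn n
  have hsn₁ := hsn (n + 1)
  push_cast at *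
  field_simp
  ring

lemma tendsto_factorial_mul_rpow_div_norm_poch {s : ℂ} (hs : ∀ m : ℕ, s ≠ -m) :
    Tendsto (fun n : ℕ => (n ! : ℝ) * ((n : ℝ) + 1) ^ (s.re - 1) / ‖poch s n‖) atTop
      (𝓝 ‖Complex.Gamma s‖) := by
  refine (tendsto_factorial_mul_cpow_div_poch hs).norm.congr fun n => ?_
  rw [norm_div, norm_mul, Complex.norm_natCast, Complex.norm_natCast_cpow_of_pos n.succ_pos]
  push_cast
  rfl

-- Bounds along `⊤` hold for every `n`, so they survive composition with `Prod.fst`, whose fibres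
-- are infinite.
lemma isBigO_poch (u : ℂ) :
    poch u =O[⊤] fun n => (n ! : ℝ) * ((n : ℝ) + 1) ^ (u.re - 1) := by
  refine IsBigO.nat_of_atTop ?_ (Eventually.of_forall fun n h => absurd h (by positivity))
  by_cases hu : ∀ m : ℕ, u ≠ -m
  · exact isBigO_norm_left.1 <| isBigO_of_div_tendsto_nhds_of_ne_zero
      (tendsto_factorial_mul_rpow_div_norm_poch hu) (norm_ne_zero_iff.2 (Complex.Gamma_ne_zero hu))
  · obtain ⟨m, hm⟩ := not_forall_not.1 hu
    exact (isBigO_zero _ _).congr' ((eventually_gt_atTop m).mono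
      fun n hn => (poch_eq_zero_of_lt hm hn).symm) EventuallyEq.rfl

lemma isBigO_inv_poch {v : ℂ} (hv : ∀ m : ℕ, v ≠ -m) :
    (fun n => (poch v n)⁻¹) =O[⊤] fun n => ((n ! : ℝ) * ((n : ℝ) + 1) ^ (v.re - 1))⁻¹ := by
  have hpoch := poch_ne_zero_iff.2 hv
  have hlower : (fun n => (n ! : ℝ) * ((n : ℝ) + 1) ^ (v.re - 1)) =O[⊤] poch v := by
    refine IsBigO.nat_of_atTop ?_ (Eventually.of_forall fun n h => absurd h (hpoch n))
    refine IsBigO.trans_le (isBigO_of_div_tendsto_nhds (Eventually.of_forall fun n h => ?_) _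
      (tendsto_factorial_mul_rpow_div_norm_poch hv)) fun n => (norm_norm _).le
    exact absurd (norm_eq_zero.1 h) (hpoch n)
  exact hlower.inv_rev (Eventually.of_forall fun n h => absurd h (by positivity))

lemma isBigO_poch_div_poch (a : ℂ) {c : ℂ} (hc : ∀ m : ℕ, c ≠ -m) :
    (fun n => poch a n / poch c n) =O[⊤] fun n => ((n : ℝ) + 1) ^ (a.re - c.re) := by
  refine ((isBigO_poch a).mul (isBigO_inv_poch hc)).congr (fun n => (div_eq_mul_inv _ _).symm)
    fun n => ?_
  have hn : (0 : ℝ) < n + 1 := by positivity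
  have : (n ! : ℝ) ≠ 0 := by positivity
  field_simp
  rw [← Real.rpow_add hn]
  ring_nf

lemma isBigO_poch_mul_pow_div_factorial (u : ℂ) {x : ℂ} (hx : ‖x‖ ≤ 1) :
    (fun n => poch u n * x ^ n / n !) =O[⊤] fun n => ((n : ℝ) + 1) ^ (u.re - 1) := by
  have hpow : (fun n : ℕ => x ^ n / n !) =O[⊤] fun n => (n ! : ℝ)⁻¹ :=
    isBigO_top.2 ⟨1, fun n => by
      rw [norm_div, norm_pow, Complex.norm_natCast, norm_inv, Real.norm_natCast, one_mul,
        div_eq_mul_inv]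
      exact mul_le_of_le_one_left (by positivity) (pow_le_one₀ (norm_nonneg x) hx)⟩
  refine ((isBigO_poch u).mul hpow).congr (fun n => (mul_div_assoc _ _ _).symm) fun n => ?_
  have : (n ! : ℝ) ≠ 0 := by positivity
  field_simp

lemma isBigO_kampeTerm (a b₁ b₂ b' : ℂ) {c d x y : ℂ} (hc : ∀ m : ℕ, c ≠ -m)
    (hd : ∀ m : ℕ, d ≠ -m) (hx : ‖x‖ ≤ 1) (hy : ‖y‖ ≤ 1) :
    kampeTerm a b₁ b₂ b' c d x y =O[⊤] fun p => ((p.1 : ℝ) + p.2 + 1) ^ (a.re - c.re) *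
      ((p.1 : ℝ) + 1) ^ (b₁.re - d.re + (b₂.re - 1)) * ((p.2 : ℝ) + 1) ^ (b'.re - 1) := by
  have hdiag := (isBigO_poch_div_poch a hc).comp_tendsto
    (tendsto_top (f := fun p : ℕ × ℕ => p.1 + p.2) (l := ⊤))
  have hfst := ((isBigO_poch_div_poch b₁ hd).mul
    (isBigO_poch_mul_pow_div_factorial b₂ hx)).comp_tendsto
      (tendsto_top (f := fun p : ℕ × ℕ => p.1) (l := ⊤))
  have hsnd := (isBigO_poch_mul_pow_div_factorial b' hy).comp_tendsto
    (tendsto_top (f := fun p : ℕ × ℕ => p.2) (l := ⊤))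
  refine ((hdiag.mul hfst).mul hsnd).congr (fun p => ?_) (fun p => ?_)
  · simp only [kampeTerm, Function.comp_apply]
    ring
  · simp only [Function.comp_apply]
    rw [Real.rpow_add (by positivity)]
    push_cast
    ring

/-- If `Re(c+d−a−b₁−b₂) > 0`, `Re(c−a−b′) > 0` and `Re(c+d−a−b₁−b₂−b′) > 0` (and `c`, `d`
are not nonpositive integers), then the Kampé de Fériet double series converges absolutely
for `|x| ≤ 1` and `|y| ≤ 1`. -/
theorem kampe_abs_convergence (a b₁ b₂ b' c d : ℂ)
    (hc : ∀ n : ℕ, poch c n ≠ 0) (hd : ∀ n : ℕ, poch d n ≠ 0)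
    (h1 : 0 < (c + d - a - b₁ - b₂).re)
    (h2 : 0 < (c - a - b').re)
    (h3 : 0 < (c + d - a - b₁ - b₂ - b').re)
    (x y : ℂ) (hx : ‖x‖ ≤ 1) (hy : ‖y‖ ≤ 1) :
    Summable (fun p : ℕ × ℕ => ‖kampeTerm a b₁ b₂ b' c d x y p‖) := by
  simp only [Complex.add_re, Complex.sub_re] at h1 h2 h3
  refine summable_of_isBigO (summable_rpow_mul_rpow_mul_rpow ?_ ?_ ?_) <|
    (isBigO_norm_left.2 <| isBigO_kampeTerm a b₁ b₂ b'
      (poch_ne_zero_iff.1 hc) (poch_ne_zero_iff.1 hd) hx hy).mono le_top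
  all_goals linarith
end

section
/- On the Hesse cubic X_t : x³+y³+1 = 3txy, one has d(y²/x) = ((x³−1)/x³) · (xy·dy/(x²−ty)) as rational differential forms, i.e. the form η_t = xy·dy/(x²−ty) satisfies ρ*(η_t) = x^{−3} η_t ≡ η_t modulo exact forms where ρ cyclically permutes the projective coordinates. -/
/-!
Differentiating the curve equation gives the tangent relation `x' (x² − t y) = y' (t x − y²)`,
which eliminates `x'` from the quotient rule: the numerator of `d(y²/x)` becomes
`y y' (2x³ + y³ − 3txy) / (x² − ty)`, and the curve equation turns `2x³ + y³ − 3txy` into `x³ − 1`.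
-/

section HesseCubic

variable {𝕜 : Type*}

theorem hesse_tangent_relation [NontriviallyNormedField 𝕜] [CharZero 𝕜] {t : 𝕜}
    {x y : 𝕜 → 𝕜} {s x' y' : 𝕜} (hx : HasDerivAt x x' s) (hy : HasDerivAt y y' s)
    (hcurve : ∀ u, x u ^ 3 + y u ^ 3 + 1 = 3 * t * x u * y u) :
    x' * (x s ^ 2 - t * y s) = y' * (t * x s - y s ^ 2) := by
  have hderiv := (((hx.pow 3).add (hy.pow 3)).add_const 1).sub ((hx.const_mul (3 * t)).mul hy)
  have hconst : ((fun u => (x ^ 3 + y ^ 3) u + 1) - (fun u => 3 * t * x u) * y) = fun _ => 0 :=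
    funext fun u => by simp [hcurve u, mul_assoc]
  rw [hconst] at hderiv
  have hzero := (hasDerivAt_const s (0 : 𝕜)).unique hderiv
  linear_combination (-1 / 3 : 𝕜) * hzero

theorem hesse_quotient_rule_eq [Field 𝕜] {t x y x' y' : 𝕜}
    (hcurve : x ^ 3 + y ^ 3 + 1 = 3 * t * x * y)
    (htangent : x' * (x ^ 2 - t * y) = y' * (t * x - y ^ 2))
    (hx0 : x ≠ 0) (hden : x ^ 2 - t * y ≠ 0) :
    (2 * y * y' * x - y ^ 2 * x') / x ^ 2 = (x ^ 3 - 1) / x ^ 3 * (x * y * y' / (x ^ 2 - t * y)) := by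
  rw [div_mul_div_comm, div_eq_div_iff (pow_ne_zero 2 hx0) (mul_ne_zero (pow_ne_zero 3 hx0) hden)]
  linear_combination x ^ 3 * (y * y' * hcurve - y ^ 2 * htangent)

end HesseCubic

theorem hesse_eta_exact_relation_general (t : ℂ)
    (x y : ℂ → ℂ) (s x' y' : ℂ)
    (hx : HasDerivAt x x' s) (hy : HasDerivAt y y' s)
    (hcurve : ∀ u : ℂ, (x u) ^ 3 + (y u) ^ 3 + 1 = 3 * t * x u * y u)
    (hx0 : x s ≠ 0) (hden : (x s) ^ 2 - t * y s ≠ 0) :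
    HasDerivAt (fun u : ℂ => (y u) ^ 2 / x u)
      (((x s) ^ 3 - 1) / (x s) ^ 3 * (x s * y s * y' / ((x s) ^ 2 - t * y s))) s := by
  refine ((hy.pow 2).div hx hx0).congr_deriv ?_
  rw [← hesse_quotient_rule_eq (hcurve s) (hesse_tangent_relation hx hy hcurve) hx0 hden]
  norm_num

/-- On the Hesse cubic `x³ + y³ + 1 = 3txy` (with `t³ ≠ 1`), one has
`d(y²/x) = ((x³−1)/x³) · (xy·dy/(x²−ty))` as differential forms: along any differentiable
path `(x(s), y(s))` on the curve with `x(s) ≠ 0` and `x(s)² − t·y(s) ≠ 0`, the derivative of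
`y²/x` equals `((x³−1)/x³)·(x·y·y'/(x²−ty))`. -/
theorem hesse_eta_exact_relation (t : ℂ) (ht : t ^ 3 ≠ 1)
    (x y : ℂ → ℂ) (s x' y' : ℂ)
    (hx : HasDerivAt x x' s) (hy : HasDerivAt y y' s)
    (hcurve : ∀ u : ℂ, (x u) ^ 3 + (y u) ^ 3 + 1 = 3 * t * x u * y u)
    (hx0 : x s ≠ 0) (hden : (x s) ^ 2 - t * y s ≠ 0) :
    HasDerivAt (fun u : ℂ => (y u) ^ 2 / x u)
      (((x s) ^ 3 - 1) / (x s) ^ 3 * (x s * y s * y' / ((x s) ^ 2 - t * y s))) s :=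
  hesse_eta_exact_relation_general t x y s x' y' hx hy hcurve hx0 hden
end
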